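/- Upper bound for extension by a maximally mixed state: for every N×N density matrix ρ (N ≥ 2), C(ρ ⊗ (I/N)) ≤ C(ρ)/2 + 1/2, where ρ ⊗ (I/N) is the N²×N² Kronecker product of ρ with the normalized N×N identity matrix. -/

import Mathlib

open Matrix BigOperators Kronecker ComplexOrder

noncomputable def vNEntropy {m : Type*} [Fintype m] [DecidableEq m]
    (ρ : Matrix m m ℂ) : ℝ :=
  if h : ρ.IsHermitian then -∑ i, h.eigenvalues i * Real.log (h.eigenvalues i) else 0

noncomputable def traceNorm {m : Type*} [Fintype m] [DecidableEq m]
    (A : Matrix m m ℂ) : ℝ :=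
  if h : A.IsHermitian then ∑ i, |h.eigenvalues i| else 0

noncomputable def mmix (m : Type*) [Fintype m] [DecidableEq m] : Matrix m m ℂ :=
  ((Fintype.card m : ℂ))⁻¹ • 1

noncomputable def diseq {m : Type*} [Fintype m] [DecidableEq m]
    (ρ : Matrix m m ℂ) : ℝ := (1/2) * traceNorm (ρ - mmix m)

noncomputable def qscm {m : Type*} [Fintype m] [DecidableEq m]
    (ρ : Matrix m m ℂ) : ℝ :=
  vNEntropy ρ * diseq ρ / Real.log (Fintype.card m)

noncomputable def kronPow {N : ℕ} (ρ : Matrix (Fin N) (Fin N) ℂ) (n : ℕ) :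
    Matrix (Fin n → Fin N) (Fin n → Fin N) ℂ :=
  fun x y => ∏ i, ρ (x i) (y i)

/-!
The eigenvalues of `ρ ⊗ I/N` are those of `ρ` divided by `N`, each repeated `N` times. Hence
`S(ρ ⊗ I/N) = S(ρ) + log N`, and since `ρ ⊗ I/N - I/N² = (ρ - I/N) ⊗ I/N` the disequilibrium is
unchanged. As `log N² = 2 log N`, this gives `C(ρ ⊗ I/N) = C(ρ)/2 + D(ρ)/2`, and `D(ρ) ≤ 1` because
`‖ρ - I/N‖₁ ≤ tr ρ + tr (I/N) = 2`.
-/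

namespace Matrix.IsHermitian

variable {𝕜 n m : Type*} [RCLike 𝕜] [Fintype n] [DecidableEq n] [Fintype m] [DecidableEq m]
  {A : Matrix n n 𝕜}

open Polynomial in
theorem eigenvalues_map_eq_of_eq_conj_diagonal {U : Matrix n n 𝕜} (hA : A.IsHermitian)
    (hU : U ∈ unitary (Matrix n n 𝕜)) {d : n → ℝ}
    (h : A = U * diagonal (RCLike.ofReal ∘ d) * star U) :
    Finset.univ.val.map hA.eigenvalues = Finset.univ.val.map d := by
  have hchar : A.charpoly = (diagonal (RCLike.ofReal ∘ d)).charpoly := by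
    rw [h, charpoly_mul_comm, ← mul_assoc, Unitary.star_mul_self_of_mem hU, one_mul]
  have hroots := hA.roots_charpoly_eq_eigenvalues
  rw [hchar, charpoly_diagonal, roots_prod _ _ (by simp [Finset.prod_ne_zero_iff, X_sub_C_ne_zero])]
    at hroots
  apply Multiset.map_injective (RCLike.ofReal_injective (K := 𝕜))
  simpa [Multiset.map_map] using hroots.symm

theorem sum_eigenvalues_eq_of_eq_conj_diagonal {U : Matrix n n 𝕜} (hA : A.IsHermitian)
    (hU : U ∈ unitary (Matrix n n 𝕜)) {d : n → ℝ}
    (h : A = U * diagonal (RCLike.ofReal ∘ d) * star U) (f : ℝ → ℝ) :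
    ∑ i, f (hA.eigenvalues i) = ∑ i, f (d i) := by
  simpa [Multiset.map_map] using
    congr_arg (fun s => (s.map f).sum) (hA.eigenvalues_map_eq_of_eq_conj_diagonal hU h)

theorem sum_eigenvalues_sub_smul_one (hA : A.IsHermitian) (c : ℝ)
    (h : (A - (c : 𝕜) • 1).IsHermitian) (f : ℝ → ℝ) :
    ∑ i, f (h.eigenvalues i) = ∑ i, f (hA.eigenvalues i - c) := by
  refine h.sum_eigenvalues_eq_of_eq_conj_diagonal hA.eigenvectorUnitary.2 ?_ f
  have hdiag : diagonal (RCLike.ofReal ∘ fun i => hA.eigenvalues i - c) =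
      diagonal (RCLike.ofReal ∘ hA.eigenvalues) - (c : 𝕜) • (1 : Matrix n n 𝕜) := by
    ext i j
    by_cases hij : i = j <;> simp [hij, sub_smul, Algebra.algebraMap_eq_smul_one]
  conv_lhs => rw [hA.spectral_theorem]
  rw [hdiag, mul_sub, sub_mul, mul_smul_comm, mul_one, smul_mul_assoc,
    Unitary.mul_star_self_of_mem hA.eigenvectorUnitary.2, Unitary.conjStarAlgAut_apply]

theorem sum_eigenvalues_kronecker_smul_one (hA : A.IsHermitian) (c : ℝ)
    (h : (A ⊗ₖ ((c : 𝕜) • (1 : Matrix m m 𝕜))).IsHermitian) (f : ℝ → ℝ) :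
    ∑ p, f (h.eigenvalues p) = Fintype.card m * ∑ i, f (hA.eigenvalues i * c) := by
  set U : Matrix n n 𝕜 := ↑hA.eigenvectorUnitary
  have hU : U ⊗ₖ (1 : Matrix m m 𝕜) ∈ unitary (Matrix (n × m) (n × m) 𝕜) :=
    kronecker_mem_unitary hA.eigenvectorUnitary.2 (one_mem _)
  rw [h.sum_eigenvalues_eq_of_eq_conj_diagonal hU (d := fun p => hA.eigenvalues p.1 * c),
    Fintype.sum_prod_type]
  · simp [Finset.mul_sum]
  · have hdiag : diagonal (RCLike.ofReal ∘ fun p : n × m => hA.eigenvalues p.1 * c) =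
        diagonal (RCLike.ofReal ∘ hA.eigenvalues) ⊗ₖ ((c : 𝕜) • (1 : Matrix m m 𝕜)) := by
      rw [smul_one_eq_diagonal, diagonal_kronecker_diagonal]
      simp [Function.comp_def]
    rw [hdiag, star_eq_conjTranspose, conjTranspose_kronecker, conjTranspose_one,
      ← star_eq_conjTranspose, ← mul_kronecker_mul, ← mul_kronecker_mul, one_mul, mul_one]
    conv_lhs => rw [hA.spectral_theorem]
    rfl

end Matrix.IsHermitian

theorem Matrix.IsHermitian.kronecker {R l m : Type*} [CommSemiring R] [StarRing R]
    {A : Matrix l l R} {B : Matrix m m R} (hA : A.IsHermitian) (hB : B.IsHermitian) :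
    (A ⊗ₖ B).IsHermitian := by
  rw [IsHermitian, conjTranspose_kronecker, hA.eq, hB.eq]

theorem Matrix.IsHermitian.sum_eigenvalues_eq_one {n : Type*} [Fintype n] [DecidableEq n]
    {ρ : Matrix n n ℂ} (hρ : ρ.IsHermitian) (htr : ρ.trace = 1) : ∑ i, hρ.eigenvalues i = 1 := by
  rw [hρ.trace_eq_sum_eigenvalues] at htr
  simpa using congr_arg Complex.re htr

section QuantumStatisticalComplexity

variable {n m : Type*} [Fintype n] [DecidableEq n] [Fintype m] [DecidableEq m]

theorem mmix_eq_smul_one : mmix m = (((Fintype.card m : ℝ)⁻¹ : ℝ) : ℂ) • 1 := by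
  simp [mmix]

theorem isHermitian_mmix : (mmix m).IsHermitian := by
  simp [mmix, IsHermitian]

theorem mmix_kronecker_mmix : mmix n ⊗ₖ mmix m = mmix (n × m) := by
  simp [mmix, smul_kronecker, kronecker_smul, smul_smul, mul_comm]

theorem vNEntropy_eq_sum_negMulLog {ρ : Matrix n n ℂ} (hρ : ρ.IsHermitian) :
    vNEntropy ρ = ∑ i, Real.negMulLog (hρ.eigenvalues i) := by
  simp [vNEntropy, hρ, Real.negMulLog]

theorem traceNorm_eq_sum_abs {A : Matrix n n ℂ} (hA : A.IsHermitian) :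
    traceNorm A = ∑ i, |hA.eigenvalues i| := by
  simp [traceNorm, hA]

theorem Matrix.IsHermitian.sum_eigenvalues_kronecker_mmix {A : Matrix n n ℂ} (hA : A.IsHermitian)
    (h : (A ⊗ₖ mmix m).IsHermitian) (f : ℝ → ℝ) :
    ∑ p, f (h.eigenvalues p) =
      Fintype.card m * ∑ i, f (hA.eigenvalues i * (Fintype.card m : ℝ)⁻¹) := by
  -- `h` mentions `mmix m`, which is a scalar matrix only propositionally: generalize, then `subst`.
  have e := mmix_eq_smul_one (m := m)
  generalize mmix m = B at h e ⊢
  subst e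
  exact hA.sum_eigenvalues_kronecker_smul_one _ h f

theorem Matrix.IsHermitian.sum_eigenvalues_sub_mmix {A : Matrix n n ℂ} (hA : A.IsHermitian)
    (h : (A - mmix n).IsHermitian) (f : ℝ → ℝ) :
    ∑ i, f (h.eigenvalues i) = ∑ i, f (hA.eigenvalues i - (Fintype.card n : ℝ)⁻¹) := by
  have e := mmix_eq_smul_one (m := n)
  generalize mmix n = B at h e ⊢
  subst e
  exact hA.sum_eigenvalues_sub_smul_one _ h f

theorem vNEntropy_kronecker_mmix [Nonempty m] {ρ : Matrix n n ℂ} (hρ : ρ.IsHermitian)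
    (htr : ρ.trace = 1) :
    vNEntropy (ρ ⊗ₖ mmix m) = vNEntropy ρ + Real.log (Fintype.card m) := by
  have hm : (Fintype.card m : ℝ) ≠ 0 := by positivity
  have h := hρ.kronecker (isHermitian_mmix (m := m))
  rw [vNEntropy_eq_sum_negMulLog h, hρ.sum_eigenvalues_kronecker_mmix h,
    vNEntropy_eq_sum_negMulLog hρ]
  simp only [Real.negMulLog_mul, Finset.sum_add_distrib, ← Finset.mul_sum, ← Finset.sum_mul,
    hρ.sum_eigenvalues_eq_one htr]
  rw [Real.negMulLog, Real.log_inv]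
  field_simp

theorem traceNorm_kronecker_mmix [Nonempty m] {A : Matrix n n ℂ} (hA : A.IsHermitian) :
    traceNorm (A ⊗ₖ mmix m) = traceNorm A := by
  have h := hA.kronecker (isHermitian_mmix (m := m))
  rw [traceNorm_eq_sum_abs h, hA.sum_eigenvalues_kronecker_mmix h, traceNorm_eq_sum_abs hA]
  simp only [abs_mul, abs_inv, Nat.abs_cast, ← Finset.sum_mul]
  field_simp

theorem kronecker_mmix_sub_mmix (ρ : Matrix n n ℂ) :
    ρ ⊗ₖ mmix m - mmix (n × m) = (ρ - mmix n) ⊗ₖ mmix m := by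
  rw [← mmix_kronecker_mmix]
  ext
  simp [sub_mul]

theorem diseq_kronecker_mmix [Nonempty m] {ρ : Matrix n n ℂ} (hρ : ρ.IsHermitian) :
    diseq (ρ ⊗ₖ mmix m) = diseq ρ := by
  rw [diseq, diseq, kronecker_mmix_sub_mmix, traceNorm_kronecker_mmix (hρ.sub isHermitian_mmix)]

theorem diseq_le_one {ρ : Matrix n n ℂ} (hρ : ρ.PosSemidef) (htr : ρ.trace = 1) :
    diseq ρ ≤ 1 := by
  set k : ℝ := (Fintype.card n : ℝ)⁻¹
  have h := hρ.1.sub (isHermitian_mmix (m := n))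
  have hk : 0 ≤ k := by positivity
  calc diseq ρ = 1 / 2 * ∑ i, |hρ.1.eigenvalues i - k| := by
        rw [diseq, traceNorm_eq_sum_abs h, hρ.1.sum_eigenvalues_sub_mmix h]
    _ ≤ 1 / 2 * ∑ i, (hρ.1.eigenvalues i + k) := by
        gcongr with i
        have := hρ.eigenvalues_nonneg i
        exact abs_le.mpr ⟨by linarith, by linarith⟩
    _ = 1 / 2 * (1 + Fintype.card n * k) := by
        rw [Finset.sum_add_distrib, hρ.1.sum_eigenvalues_eq_one htr, Finset.sum_const,
          Finset.card_univ, nsmul_eq_mul]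
    _ ≤ 1 := by linarith [mul_inv_le_one (G₀ := ℝ) (a := Fintype.card n)]

theorem qscm_kronecker_mmix {ρ : Matrix n n ℂ} (hρ : ρ.IsHermitian) (htr : ρ.trace = 1)
    (hn : 1 < Fintype.card n) : qscm (ρ ⊗ₖ mmix n) = qscm ρ / 2 + diseq ρ / 2 := by
  have : Nonempty n := Fintype.card_pos_iff.mp (by omega)
  have hlog : Real.log (Fintype.card n) ≠ 0 := (Real.log_pos (by exact_mod_cast hn)).ne'
  rw [qscm, qscm, vNEntropy_kronecker_mmix hρ htr, diseq_kronecker_mmix hρ, Fintype.card_prod,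
    Nat.cast_mul, Real.log_mul (by positivity) (by positivity)]
  field_simp
  ring

end QuantumStatisticalComplexity

/-- upper bound for extension by a maximally mixed state. -/
theorem qscm_extension_mmix_le {N : ℕ} (hN : 2 ≤ N)
    (ρ : Matrix (Fin N) (Fin N) ℂ) (hρ : ρ.PosSemidef) (htr : ρ.trace = 1) :
    qscm (ρ ⊗ₖ mmix (Fin N)) ≤ qscm ρ / 2 + 1/2 := by
  rw [qscm_kronecker_mmix hρ.1 htr (by rw [Fintype.card_fin]; omega)]
  linarith [diseq_le_one hρ htr]
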